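/- arXiv:1910.13650 — 4 statements merged into one kernel-verified Lean document; each statement's English description precedes it below -/
import Mathlib

section
/- Let A ⊆ ℝⁿ be a nonempty compact set and let Â = conv(A ∪ {0}). Then for every x ∈ ℝⁿ, the gauge γ_A(x) = inf{μ ≥ 0 : x ∈ μÂ} equals the infimum of Σ_{a∈A} c_a over all representations x = Σ_{a∈A} c_a·a as a finite nonnegative linear combination of atoms a ∈ A with coefficients c_a ≥ 0 (with the infimum equal to +∞ if no such representation exists). -/
open scoped ENNReal NNReal Pointwise RealInnerProductSpace

/-- The gauge of the atomic set `A`: `γ_A(x) = inf {μ ≥ 0 : x ∈ μ·conv(A ∪ {0})}`,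
with value `+∞` if `x ∉ μ·conv(A ∪ {0})` for every `μ ≥ 0`. -/
noncomputable def atomicGauge {n : ℕ} (A : Set (EuclideanSpace ℝ (Fin n)))
    (x : EuclideanSpace ℝ (Fin n)) : ℝ≥0∞ :=
  sInf {c : ℝ≥0∞ | ∃ μ : ℝ≥0, c = (μ : ℝ≥0∞) ∧
    x ∈ (μ : ℝ) • (convexHull ℝ (A ∪ {0}))}

/-- for a nonempty compact atomic set `A`, the gauge `γ_A(x)` equals the
infimum of `Σ_{a∈A} c_a` over all representations of `x` as a finite nonnegative
linear combination of atoms of `A` (with value `+∞` if no representation exists). -/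
theorem atomicGauge_eq_inf_sum_coeffs {n : ℕ} (A : Set (EuclideanSpace ℝ (Fin n)))
    (hA : A.Nonempty) (hAcompact : IsCompact A) (x : EuclideanSpace ℝ (Fin n)) :
    atomicGauge A x =
      sInf {c : ℝ≥0∞ | ∃ (S : Finset (EuclideanSpace ℝ (Fin n)))
        (w : EuclideanSpace ℝ (Fin n) → ℝ), ↑S ⊆ A ∧ (∀ a ∈ S, 0 ≤ w a) ∧
          x = ∑ a ∈ S, w a • a ∧ c = ENNReal.ofReal (∑ a ∈ S, w a)} := by
  classical
  apply le_antisymm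
  · -- gauge ≤ RHS
    apply le_sInf
    rintro c ⟨S, w, hSA, hw0, hx, rfl⟩
    set s : ℝ := ∑ a ∈ S, w a with hs
    have hs0 : 0 ≤ s := Finset.sum_nonneg hw0
    apply sInf_le
    refine ⟨s.toNNReal, by rw [ENNReal.ofReal], ?_⟩
    rw [Real.coe_toNNReal _ hs0]
    rcases eq_or_lt_of_le hs0 with h0 | hpos
    · -- s = 0 : all weights are zero, x = 0
      have hwz : ∀ a ∈ S, w a = 0 :=
        (Finset.sum_eq_zero_iff_of_nonneg hw0).1 h0.symm
      have hx0 : x = 0 := by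
        rw [hx]
        exact Finset.sum_eq_zero fun a ha => by rw [hwz a ha, zero_smul]
      have hne : (convexHull ℝ (A ∪ {0})).Nonempty :=
        hA.mono (subset_trans Set.subset_union_left (subset_convexHull ℝ _))
      rw [← h0, Set.zero_smul_set hne, hx0]
      exact rfl
    · -- s > 0 : x / s is the center of mass
      have hy : S.centerMass w id ∈ convexHull ℝ (A ∪ {0}) :=
        convexHull_mono (hSA.trans Set.subset_union_left)
          (S.centerMass_id_mem_convexHull hw0 hpos)
      refine ⟨S.centerMass w id, hy, ?_⟩
      show s • S.centerMass w id = x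
      rw [Finset.centerMass, smul_smul, mul_inv_cancel₀ (ne_of_gt hpos), one_smul]
      simp only [id]
      exact hx.symm
  · -- RHS ≤ gauge
    apply le_sInf
    rintro c ⟨μ, rfl, hx⟩
    obtain ⟨y, hy, hxy⟩ := hx
    rw [convexHull_eq_union_convexHull_finite_subsets] at hy
    obtain ⟨t, ht, hyt⟩ := Set.mem_iUnion₂.1 hy
    rw [Finset.convexHull_eq] at hyt
    obtain ⟨w, hw0, hw1, hcm⟩ := hyt
    have hyc : y = ∑ a ∈ t, w a • a := by
      rw [← hcm, Finset.centerMass, hw1, inv_one, one_smul]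
      simp [id]
    set S : Finset (EuclideanSpace ℝ (Fin n)) := t.filter (· ∈ A) with hS
    have hSA : ↑S ⊆ A := by
      intro a ha
      exact (Finset.mem_filter.1 ha).2
    have hxs : x = ∑ a ∈ S, ((μ : ℝ) * w a) • a := by
      rw [← hxy]
      show (μ : ℝ) • y = _
      rw [hyc, Finset.smul_sum]
      rw [← Finset.sum_subset (Finset.filter_subset (· ∈ A) t)]
      · exact Finset.sum_congr rfl fun a _ => by rw [mul_smul]
      · intro a hat haS
        have : a ∉ A := fun h => haS (Finset.mem_filter.2 ⟨hat, h⟩)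
        have ha0 : a = 0 := by
          rcases ht hat with h | h
          · exact absurd h this
          · exact h
        rw [ha0, smul_zero, smul_zero]
    have hsum : ∑ a ∈ S, (μ : ℝ) * w a ≤ (μ : ℝ) := by
      calc ∑ a ∈ S, (μ : ℝ) * w a ≤ ∑ a ∈ t, (μ : ℝ) * w a :=
            Finset.sum_le_sum_of_subset_of_nonneg (Finset.filter_subset _ t)
              (fun a ha _ => mul_nonneg μ.2 (hw0 a ha))
        _ = (μ : ℝ) := by rw [← Finset.mul_sum, hw1, mul_one]
    refine le_trans (sInf_le ⟨S, fun a => (μ : ℝ) * w a, hSA,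
      fun a ha => mul_nonneg μ.2 (hw0 a (Finset.mem_filter.1 ha).1), hxs, rfl⟩) ?_
    rw [← ENNReal.ofReal_coe_nnreal]
    exact ENNReal.ofReal_le_ofReal hsum
end

section
/- Let A ⊆ ℝⁿ be a nonempty compact set, M : ℝⁿ → ℝᵐ linear, B ⊆ ℝᵐ, and suppose x* minimizes γ_A(x) subject to Mx ∈ B. If S ⊆ A is a support set for x* (i.e., x* = Σ_{a∈S} c_a·a with all c_a > 0 and γ_A(x*) = Σ_{a∈S} c_a), then x* also minimizes γ_S(x) subject to Mx ∈ B, and the optimal values of the two problems coincide: min{γ_S(x) : Mx ∈ B} = min{γ_A(x) : Mx ∈ B}. -/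
open scoped ENNReal NNReal Pointwise RealInnerProductSpace

/-- The support function of `conv(A ∪ {0})`: `σ_A(z) = sup_{a ∈ conv(A ∪ {0})} ⟨a, z⟩`. -/
noncomputable def atomicSupport {n : ℕ} (A : Set (EuclideanSpace ℝ (Fin n)))
    (z : EuclideanSpace ℝ (Fin n)) : ℝ :=
  sSup ((fun a => ⟪a, z⟫) '' convexHull ℝ (A ∪ {0}))

/-- Monotonicity: the gauge of a smaller atomic set is larger. -/
lemma atomicGauge_anti {n : ℕ} {S A : Set (EuclideanSpace ℝ (Fin n))} (h : S ⊆ A)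
    (x : EuclideanSpace ℝ (Fin n)) : atomicGauge A x ≤ atomicGauge S x := by
  apply sInf_le_sInf
  rintro v ⟨μ, rfl, hx⟩
  exact ⟨μ, rfl, Set.smul_set_mono (convexHull_mono (Set.union_subset_union_left _ h)) hx⟩

/-- If `x = ∑ c a • a` with positive coefficients on `S`, then `γ_S(x) ≤ ∑ c a`. -/
lemma atomicGauge_le_of_rep {n : ℕ}
    (S : Finset (EuclideanSpace ℝ (Fin n)))
    (c : EuclideanSpace ℝ (Fin n) → ℝ) (hc : ∀ a ∈ S, 0 < c a)
    (xstar : EuclideanSpace ℝ (Fin n)) (hrep : xstar = ∑ a ∈ S, c a • a) :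
    atomicGauge (↑S) xstar ≤ ENNReal.ofReal (∑ a ∈ S, c a) := by
  have hmem : xstar ∈ (∑ a ∈ S, c a) • convexHull ℝ ((↑S : Set _) ∪ {0}) := by
    rcases S.eq_empty_or_nonempty with hS | hS
    · subst hS
      simp only [Finset.sum_empty] at hrep ⊢
      have h0 : (0 : EuclideanSpace ℝ (Fin n)) ∈
          convexHull ℝ ((↑(∅ : Finset (EuclideanSpace ℝ (Fin n))) : Set _) ∪ {0}) :=
        subset_convexHull _ _ (Or.inr rfl)
      have := Set.smul_mem_smul_set (a := (0 : ℝ)) h0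
      simpa [hrep] using this
    · have hsum : 0 < ∑ a ∈ S, c a := Finset.sum_pos hc hS
      have hcm : S.centerMass c id ∈ convexHull ℝ ((↑S : Set _) ∪ {0}) :=
        S.centerMass_mem_convexHull (fun a ha => (hc a ha).le) hsum
          (fun a ha => Or.inl (by simpa using ha))
      have hx : xstar = (∑ a ∈ S, c a) • S.centerMass c id := by
        rw [Finset.centerMass, smul_smul, mul_inv_cancel₀ hsum.ne', one_smul, hrep]
        simp
      rw [hx]
      exact Set.smul_mem_smul_set hcm
  apply sInf_le
  refine ⟨(∑ a ∈ S, c a).toNNReal, rfl, ?_⟩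
  rwa [Real.coe_toNNReal _ (Finset.sum_nonneg fun a ha => (hc a ha).le)]

/-- if `x*` solves the atomic pursuit problem `min γ_A(x) s.t. Mx ∈ B`
and `S` is a support set for `x*`, then `x*` also solves the reduced problem
`min γ_S(x) s.t. Mx ∈ B`, and the two optimal values coincide. -/
theorem reduced_problem_equivalence {n m : ℕ} (A : Set (EuclideanSpace ℝ (Fin n)))
    (hA : A.Nonempty) (hAcompact : IsCompact A)
    (M : EuclideanSpace ℝ (Fin n) →ₗ[ℝ] EuclideanSpace ℝ (Fin m))
    (B : Set (EuclideanSpace ℝ (Fin m)))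
    (xstar : EuclideanSpace ℝ (Fin n)) (hfeas : M xstar ∈ B)
    (hopt : ∀ x, M x ∈ B → atomicGauge A xstar ≤ atomicGauge A x)
    (S : Finset (EuclideanSpace ℝ (Fin n))) (hSA : ↑S ⊆ A)
    (c : EuclideanSpace ℝ (Fin n) → ℝ) (hc : ∀ a ∈ S, 0 < c a)
    (hrep : xstar = ∑ a ∈ S, c a • a)
    (hval : atomicGauge A xstar = ENNReal.ofReal (∑ a ∈ S, c a)) :
    (∀ x, M x ∈ B → atomicGauge (↑S) xstar ≤ atomicGauge (↑S) x) ∧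
      sInf {v : ℝ≥0∞ | ∃ x, M x ∈ B ∧ v = atomicGauge (↑S : Set (EuclideanSpace ℝ (Fin n))) x} =
        sInf {v : ℝ≥0∞ | ∃ x, M x ∈ B ∧ v = atomicGauge A x} := by
  have heq : atomicGauge (↑S) xstar = atomicGauge A xstar :=
    le_antisymm (hval ▸ atomicGauge_le_of_rep S c hc xstar hrep) (atomicGauge_anti hSA xstar)
  have hoptS : ∀ x, M x ∈ B → atomicGauge (↑S) xstar ≤ atomicGauge (↑S) x := fun x hx =>
    heq ▸ le_trans (hopt x hx) (atomicGauge_anti hSA x)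
  refine ⟨hoptS, le_antisymm ?_ ?_⟩
  · -- sInf_S ≤ sInf_A
    have h1 : sInf {v : ℝ≥0∞ | ∃ x, M x ∈ B ∧ v = atomicGauge (↑S : Set _) x} ≤
        atomicGauge (↑S) xstar := sInf_le ⟨xstar, hfeas, rfl⟩
    have h2 : atomicGauge A xstar ≤ sInf {v : ℝ≥0∞ | ∃ x, M x ∈ B ∧ v = atomicGauge A x} := by
      apply le_sInf
      rintro v ⟨x, hx, rfl⟩
      exact hopt x hx
    exact le_trans h1 (heq ▸ h2)
  · apply le_sInf
    rintro v ⟨x, hx, rfl⟩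
    exact le_trans (sInf_le ⟨x, hx, rfl⟩) (atomicGauge_anti hSA x)
end

section
/- Let P be an n×r real matrix with orthonormal columns and let W be an n×n symmetric matrix with W ⪰ 0 and trace(W) ≤ 1. Define the spectral bundle set A' = {αW + P V Pᵀ : α ≥ 0, V ⪰ 0 symmetric r×r, α + trace(V) ≤ 1}. Then for every n×n symmetric matrix Z, the support function of A' satisfies sup_{X∈A'} ⟨X, Z⟩ = max{0, λ_max(Pᵀ Z P), ⟨W, Z⟩}. -/
open Matrix

open scoped ENNReal NNReal Pointwise

/-- The support function of `conv(A ∪ {0})` for a set `A` of `n×n` real matrices,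
with respect to the trace inner product `⟨X, Z⟩ = trace(XᵀZ)`. -/
noncomputable def matrixSupport {n : ℕ} (A : Set (Matrix (Fin n) (Fin n) ℝ))
    (Z : Matrix (Fin n) (Fin n) ℝ) : ℝ :=
  sSup ((fun X => (Xᵀ * Z).trace) '' convexHull ℝ (A ∪ {0}))

/-- The spectral atomic set `{u·uᵀ : ‖u‖₂ = 1}` of unit-norm rank-one PSD matrices. -/
def spectralAtoms (n : ℕ) : Set (Matrix (Fin n) (Fin n) ℝ) :=
  {X | ∃ u : EuclideanSpace ℝ (Fin n), ‖u‖ = 1 ∧ X = Matrix.of fun i j => u i * u j}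

/-- The largest eigenvalue of a matrix: the supremum of `t` such that `t` is an
eigenvalue of `Z` (for a symmetric matrix this is the maximal eigenvalue). -/
noncomputable def lambdaMax {k : ℕ} (Z : Matrix (Fin k) (Fin k) ℝ) : ℝ :=
  sSup {t : ℝ | ∃ v : Fin k → ℝ, v ≠ 0 ∧ Z.mulVec v = t • v}

lemma eigenSet_eq {k : ℕ} {M : Matrix (Fin k) (Fin k) ℝ} (hM : M.IsHermitian) :
    {t : ℝ | ∃ v : Fin k → ℝ, v ≠ 0 ∧ M.mulVec v = t • v} = Set.range hM.eigenvalues := by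
  ext t
  simp only [Set.mem_setOf_eq]
  constructor
  · rintro ⟨v, hv, hMv⟩
    have ht : t ∈ spectrum ℝ M := by
      rw [← AlgEquiv.spectrum_eq (Matrix.toLinAlgEquiv' (R := ℝ) (n := Fin k)) M]
      refine Module.End.HasEigenvalue.mem_spectrum
        (Module.End.hasEigenvalue_of_hasEigenvector ⟨?_, hv⟩)
      rw [Module.End.mem_eigenspace_iff]
      simpa [Matrix.toLinAlgEquiv'_apply] using hMv
    rw [hM.spectrum_real_eq_range_eigenvalues] at ht
    exact ht
  · rintro ⟨i, rfl⟩
    refine ⟨hM.eigenvectorBasis i, ?_, hM.mulVec_eigenvectorBasis i⟩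
    intro h
    exact hM.eigenvectorBasis.orthonormal.ne_zero i (by ext j; exact congrFun h j)

lemma eigen_le_lambdaMax {k : ℕ} {M : Matrix (Fin k) (Fin k) ℝ} (hM : M.IsHermitian) (i : Fin k) :
    hM.eigenvalues i ≤ lambdaMax M := by
  rw [lambdaMax, eigenSet_eq hM]
  exact le_csSup (Set.finite_range _).bddAbove ⟨i, rfl⟩

lemma psd_trace_nonneg' {k : ℕ} {A : Matrix (Fin k) (Fin k) ℝ} (hA : A.PosSemidef) :
    0 ≤ A.trace := by
  rw [Matrix.trace]
  refine Finset.sum_nonneg fun i _ => ?_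
  simpa [Matrix.mulVec_single, dotProduct, Pi.single_apply] using hA.dotProduct_mulVec_nonneg (Pi.single i 1)

lemma psd_mul_trace_nonneg {k : ℕ} {A B : Matrix (Fin k) (Fin k) ℝ}
    (hA : A.PosSemidef) (hB : B.PosSemidef) : 0 ≤ (A * B).trace := by
  obtain ⟨C, rfl⟩ : ∃ C : Matrix (Fin k) (Fin k) ℝ, A = Cᴴ * C := by
    open MatrixOrder in
    obtain ⟨X, hX, -, hXA⟩ := CFC.exists_sqrt_of_isSelfAdjoint_of_quasispectrumRestricts
      hA.1 (QuasispectrumRestricts.nnreal_of_nonneg hA.nonneg)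
    exact ⟨X, by rw [← Matrix.star_eq_conjTranspose, hX.star_eq, hXA]⟩
  rw [Matrix.mul_assoc, Matrix.trace_mul_comm]
  exact psd_trace_nonneg' (hB.mul_mul_conjTranspose_same C)

lemma eig_shift {k : ℕ} {M : Matrix (Fin k) (Fin k) ℝ} {L t : ℝ} {u : Fin k → ℝ}
    (h : (L • (1 : Matrix (Fin k) (Fin k) ℝ) - M) *ᵥ u = t • u) :
    M *ᵥ u = (L - t) • u := by
  rw [Matrix.sub_mulVec, Matrix.smul_mulVec, Matrix.one_mulVec] at h
  have := sub_eq_iff_eq_add.mp h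
  rw [sub_smul, this]
  abel

lemma trace_mul_le {k : ℕ} {M V : Matrix (Fin k) (Fin k) ℝ} (hM : M.IsHermitian)
    (hV : V.PosSemidef) :
    (V * M).trace ≤ max 0 (lambdaMax M) * V.trace := by
  set L := max 0 (lambdaMax M) with hL
  set N := L • (1 : Matrix (Fin k) (Fin k) ℝ) - M with hNdef
  have hN : N.IsHermitian := by
    rw [Matrix.IsHermitian, hNdef, Matrix.conjTranspose_sub, Matrix.conjTranspose_smul,
      Matrix.conjTranspose_one, hM.eq]
    simp
  have hNpsd : N.PosSemidef := by
    refine hN.posSemidef_iff_eigenvalues_nonneg.mpr fun i => show (0:ℝ) ≤ _ from ?_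
    have hv := hN.mulVec_eigenvectorBasis i
    have hv' := eig_shift (M := M) hv
    have hmem : (L - hN.eigenvalues i) ∈
        {t : ℝ | ∃ v : Fin k → ℝ, v ≠ 0 ∧ M.mulVec v = t • v} := by
      refine ⟨_, ?_, hv'⟩
      intro h
      exact hN.eigenvectorBasis.orthonormal.ne_zero i (by ext j; exact congrFun h j)
    rw [eigenSet_eq hM] at hmem
    obtain ⟨j, hj⟩ := hmem
    have h2 : L - hN.eigenvalues i ≤ lambdaMax M := hj ▸ eigen_le_lambdaMax hM j
    have hle : lambdaMax M ≤ L := le_max_right _ _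
    linarith
  have h0 : 0 ≤ (V * N).trace := psd_mul_trace_nonneg hV hNpsd
  have hexp : (V * N).trace = L * V.trace - (V * M).trace := by
    rw [hNdef, Matrix.mul_sub, Matrix.trace_sub]
    rw [Matrix.mul_smul, Matrix.mul_one, Matrix.trace_smul]
    simp
  linarith [hexp ▸ h0]

/-- spectral cutting-plane model.  For the spectral bundle set
`A' = {αW + P V Pᵀ : α ≥ 0, V ⪰ 0, α + trace(V) ≤ 1}`, the support function at a
symmetric matrix `Z` is `max {0, λ_max(Pᵀ Z P), ⟨W, Z⟩}`. -/
theorem spectral_cutting_plane_model {n r : ℕ} (P : Matrix (Fin n) (Fin r) ℝ)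
    (hP : Pᵀ * P = 1) (W : Matrix (Fin n) (Fin n) ℝ)
    (hW : W.PosSemidef) (hWtr : W.trace ≤ 1)
    (Z : Matrix (Fin n) (Fin n) ℝ) (hZ : Z.IsSymm) :
    sSup ((fun X => (Xᵀ * Z).trace) ''
        {X : Matrix (Fin n) (Fin n) ℝ | ∃ (α : ℝ) (V : Matrix (Fin r) (Fin r) ℝ),
          0 ≤ α ∧ V.PosSemidef ∧ α + V.trace ≤ 1 ∧ X = α • W + P * V * Pᵀ}) =
      max 0 (max (lambdaMax (Pᵀ * Z * P)) ((Wᵀ * Z).trace)) := by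
  set M : Matrix (Fin r) (Fin r) ℝ := Pᵀ * Z * P with hMdef
  set w : ℝ := (Wᵀ * Z).trace with hwdef
  set lam : ℝ := lambdaMax M with hlamdef
  set R : ℝ := max 0 (max lam w) with hRdef
  have hM : M.IsHermitian := by
    rw [Matrix.IsHermitian, hMdef, Matrix.conjTranspose_eq_transpose_of_trivial,
      Matrix.transpose_mul, Matrix.transpose_mul, Matrix.transpose_transpose, hZ.eq,
      Matrix.mul_assoc]
  -- the value of the objective on a generic element
  have hval : ∀ (α : ℝ) (V : Matrix (Fin r) (Fin r) ℝ), V.PosSemidef →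
      (((α • W + P * V * Pᵀ)ᵀ * Z).trace) = α * w + (V * M).trace := by
    intro α V hV
    have hVsymm : Vᵀ = V := by
      rw [← Matrix.conjTranspose_eq_transpose_of_trivial, hV.1]
    have ht : (P * V * Pᵀ)ᵀ = P * V * Pᵀ := by
      rw [Matrix.transpose_mul, Matrix.transpose_mul, Matrix.transpose_transpose, hVsymm,
        Matrix.mul_assoc]
    have htr : ((P * V * Pᵀ) * Z).trace = (V * M).trace := by
      rw [Matrix.mul_assoc (P * V) Pᵀ Z, Matrix.trace_mul_comm, ← Matrix.mul_assoc,
        ← Matrix.mul_assoc, Matrix.trace_mul_comm, ← Matrix.mul_assoc]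
    rw [Matrix.transpose_add, Matrix.transpose_smul, Matrix.add_mul, Matrix.trace_add,
      Matrix.smul_mul, Matrix.trace_smul, ht, htr, hwdef]
    simp [smul_eq_mul]
  set A' : Set (Matrix (Fin n) (Fin n) ℝ) :=
    {X : Matrix (Fin n) (Fin n) ℝ | ∃ (α : ℝ) (V : Matrix (Fin r) (Fin r) ℝ),
      0 ≤ α ∧ V.PosSemidef ∧ α + V.trace ≤ 1 ∧ X = α • W + P * V * Pᵀ} with hA'def
  set f : Matrix (Fin n) (Fin n) ℝ → ℝ := fun X => (Xᵀ * Z).trace with hfdef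
  -- membership of the three candidate values
  have mem0 : (0 : ℝ) ∈ f '' A' := by
    refine ⟨(0:ℝ) • W + P * (0 : Matrix (Fin r) (Fin r) ℝ) * Pᵀ,
      ⟨0, 0, le_refl 0, Matrix.PosSemidef.zero, by simp, rfl⟩, ?_⟩
    rw [hfdef]
    simp only
    rw [hval 0 0 Matrix.PosSemidef.zero]
    simp
  have memw : w ∈ f '' A' := by
    refine ⟨(1:ℝ) • W + P * (0 : Matrix (Fin r) (Fin r) ℝ) * Pᵀ,
      ⟨1, 0, zero_le_one, Matrix.PosSemidef.zero, by simp, rfl⟩, ?_⟩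
    rw [hfdef]
    simp only
    rw [hval 1 0 Matrix.PosSemidef.zero]
    simp
  -- upper bound
  have hub : ∀ y ∈ f '' A', y ≤ R := by
    rintro y ⟨X, ⟨α, V, hα, hV, htrace, rfl⟩, rfl⟩
    rw [hfdef]
    simp only
    rw [hval α V hV]
    have htrV : 0 ≤ V.trace := psd_trace_nonneg' hV
    have hα1 : α ≤ 1 := by linarith
    have h1 : (V * M).trace ≤ max 0 lam * V.trace := trace_mul_le hM hV
    have h2 : max 0 lam * V.trace ≤ max 0 lam * (1 - α) :=
      mul_le_mul_of_nonneg_left (by linarith) (le_max_left _ _)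
    have hwR : w ≤ R := (le_max_right lam w).trans (le_max_right _ _)
    have hLR : max 0 lam ≤ R :=
      max_le (le_max_left _ _) ((le_max_left lam w).trans (le_max_right _ _))
    have e1 : α * w ≤ α * R := mul_le_mul_of_nonneg_left hwR hα
    have e3 : max 0 lam * (1 - α) ≤ R * (1 - α) :=
      mul_le_mul_of_nonneg_right hLR (by linarith)
    have e4 : α * R + R * (1 - α) = R := by ring
    linarith
  have hbdd : BddAbove (f '' A') := ⟨R, fun y hy => hub y hy⟩
  apply le_antisymm
  · exact csSup_le ⟨0, mem0⟩ hub
  · rw [hRdef]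
    refine max_le (le_csSup hbdd mem0) (max_le ?_ (le_csSup hbdd memw))
    -- lam ≤ sSup
    rcases Nat.eq_zero_or_pos r with hr | hr
    · have hlam0 : lam = 0 := by
        rw [hlamdef, lambdaMax]
        have hempty : {t : ℝ | ∃ v : Fin r → ℝ, v ≠ 0 ∧ M.mulVec v = t • v} = ∅ := by
          ext t
          simp only [Set.mem_setOf_eq, Set.mem_empty_iff_false, iff_false, not_exists]
          rintro v ⟨hv, -⟩
          subst hr
          exact hv (Subsingleton.elim v 0)
        rw [hempty, Real.sSup_empty]
      rw [hlam0]
      exact le_csSup hbdd mem0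
    · have : Nonempty (Fin r) := ⟨⟨0, hr⟩⟩
      obtain ⟨i0, hi0⟩ := Finite.exists_max hM.eigenvalues
      have hlam : lam = hM.eigenvalues i0 := by
        rw [hlamdef]
        refine le_antisymm ?_ (eigen_le_lambdaMax hM i0)
        rw [lambdaMax, eigenSet_eq hM]
        refine csSup_le (Set.range_nonempty _) ?_
        rintro t ⟨j, rfl⟩
        exact hi0 j
      set u : Fin r → ℝ := ⇑(hM.eigenvectorBasis i0) with hudef
      have hMu : M *ᵥ u = hM.eigenvalues i0 • u := hM.mulVec_eigenvectorBasis i0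
      have huu : u ⬝ᵥ u = 1 := by
        have h1 : ‖hM.eigenvectorBasis i0‖ = 1 := hM.eigenvectorBasis.orthonormal.1 i0
        have h2 : (inner ℝ (hM.eigenvectorBasis i0) (hM.eigenvectorBasis i0) : ℝ) = 1 := by
          rw [real_inner_self_eq_norm_mul_norm, h1, mul_one]
        simp only [PiLp.inner_apply, RCLike.inner_apply, conj_trivial] at h2
        simpa [dotProduct, hudef] using h2
      set V0 : Matrix (Fin r) (Fin r) ℝ := Matrix.of fun i j => u i * u j with hV0def
      have hV0 : V0.PosSemidef := by
        refine Matrix.PosSemidef.of_dotProduct_mulVec_nonneg ?_ ?_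
        · ext i j
          simp [hV0def, Matrix.conjTranspose_apply, mul_comm]
        · intro x
          have hx : V0 *ᵥ x = (u ⬝ᵥ x) • u := by
            ext i
            simp only [hV0def, Matrix.mulVec, dotProduct, Matrix.of_apply, Pi.smul_apply,
              smul_eq_mul, Finset.sum_mul]
            exact Finset.sum_congr rfl fun j _ => by ring
          rw [hx]
          have : star x = x := by
            ext i; simp
          rw [this, dotProduct_smul]
          have : x ⬝ᵥ u = u ⬝ᵥ x := dotProduct_comm x u
          rw [smul_eq_mul, this]
          exact mul_self_nonneg _
      have htrV0 : V0.trace = 1 := by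
        have : V0.trace = u ⬝ᵥ u := by
          simp [hV0def, Matrix.trace, Matrix.diag, dotProduct]
        rw [this, huu]
      have hvalue : (V0 * M).trace = hM.eigenvalues i0 := by
        rw [Matrix.trace_mul_comm]
        have h3 : (M * V0).trace = u ⬝ᵥ (M *ᵥ u) := by
          simp only [hV0def, Matrix.trace, Matrix.diag, Matrix.mul_apply, Matrix.of_apply,
            dotProduct, Matrix.mulVec, Finset.mul_sum]
          exact Finset.sum_congr rfl fun i _ => Finset.sum_congr rfl fun j _ => by ring
        rw [h3, hMu, dotProduct_smul, smul_eq_mul, huu, mul_one]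
      rw [hlam]
      refine le_csSup hbdd ?_
      refine ⟨(0:ℝ) • W + P * V0 * Pᵀ, ⟨0, V0, le_refl 0, hV0, by rw [htrV0]; norm_num, rfl⟩, ?_⟩
      rw [hfdef]
      simp only
      rw [hval 0 V0 hV0, hvalue]
      ring
end

section
/- Let b ∈ ℝᵐ and 0 ≤ ε < ‖b‖₂, and let B = {u ∈ ℝᵐ : ‖u − b‖₂ ≤ ε} be the Euclidean ball of radius ε centered at b (which does not contain 0). Then the antipolar of B satisfies B' := {y ∈ ℝᵐ : ⟨u, y⟩ ≥ 1 for all u ∈ B} = {y ∈ ℝᵐ : ⟨b, y⟩ − ε‖y‖₂ ≥ 1}. -/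
open scoped RealInnerProductSpace

/-- the antipolar of the Euclidean ball `B = {u : ‖u − b‖₂ ≤ ε}` with
`0 ≤ ε < ‖b‖₂` is `B' = {y : ⟨b, y⟩ − ε‖y‖₂ ≥ 1}`. -/
theorem antipolar_closedBall {m : ℕ} (b : EuclideanSpace ℝ (Fin m)) (ε : ℝ)
    (hε : 0 ≤ ε) (hεb : ε < ‖b‖) :
    {y : EuclideanSpace ℝ (Fin m) | ∀ u ∈ Metric.closedBall b ε, 1 ≤ ⟪u, y⟫} =
      {y : EuclideanSpace ℝ (Fin m) | 1 ≤ ⟪b, y⟫ - ε * ‖y‖} := by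
  ext y
  simp only [Set.mem_setOf_eq, Metric.mem_closedBall, dist_eq_norm]
  constructor
  · intro h
    by_cases hy : y = 0
    · have := h b (by simp [hε])
      simp [hy] at this
      linarith
    · have hny : (0:ℝ) < ‖y‖ := norm_pos_iff.mpr hy
      set u := b - (ε / ‖y‖) • y with hu
      have hub : ‖u - b‖ ≤ ε := by
        have : u - b = -((ε / ‖y‖) • y) := by rw [hu]; abel
        rw [this, norm_neg, norm_smul, Real.norm_eq_abs,
          abs_of_nonneg (div_nonneg hε hny.le), div_mul_cancel₀ _ hny.ne']
      have := h u hub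
      have hiu : ⟪u, y⟫ = ⟪b, y⟫ - ε * ‖y‖ := by
        rw [hu, inner_sub_left, real_inner_smul_left, real_inner_self_eq_norm_mul_norm]
        field_simp
      linarith [hiu ▸ this]
  · intro h u hu
    have h1 : ⟪b - u, y⟫ ≤ ‖b - u‖ * ‖y‖ := real_inner_le_norm _ _
    have h2 : ‖b - u‖ * ‖y‖ ≤ ε * ‖y‖ := by
      apply mul_le_mul_of_nonneg_right _ (norm_nonneg _)
      rw [← norm_neg]; simpa using hu
    have : ⟪u, y⟫ = ⟪b, y⟫ - ⟪b - u, y⟫ := by rw [inner_sub_left]; ring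
    linarith
end
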